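/- arXiv:0709.1865 — 3 statements merged into one kernel-verified Lean document; each statement's English description precedes it below -/
import Mathlib

section
/- Let (f_i)_{i∈I} be a Parseval frame for a Hilbert space H₁ and let (g_i)_{i∈I} be vectors spanning a dense subspace of a Hilbert space H₂ such that ⟨g_i, g_j⟩ = δ_{i,j} − ⟨f_i, f_j⟩ for all i, j ∈ I. Then (f_i ⊕ g_i)_{i∈I} is an orthonormal basis for H₁ ⊕ H₂, and (g_i)_{i∈I} is a Parseval frame for H₂. -/
/-!
The hypothesis on the Gram matrices says exactly that the vectors `(f i, g i)` are orthonormal.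
Parseval's identity for `f` forces every `(v, 0)` into the closed span of this orthonormal
family, since an orthonormal family captures all of a vector's norm only on its closed span.
Hence the closed span also contains `(f i, g i) - (f i, 0) = (0, g i)`, hence all of `0 ⊕ H₂`
by density of the `g i`, and so it is everything: the family is a Hilbert basis. Parseval's
identity for this basis, applied to `(0, w)`, is Parseval's identity for `g`.
-/

open Submodule

section
variable {𝕜 ι E : Type*} [RCLike 𝕜] [NormedAddCommGroup E] [InnerProductSpace 𝕜 E]

variable (𝕜) in
def IsParsevalFrame (f : ι → E) : Prop :=
  ∀ x : E, ‖x‖ ^ 2 = ∑' i, ‖(inner 𝕜 x (f i) : 𝕜)‖ ^ 2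

theorem HilbertBasis.isParsevalFrame (b : HilbertBasis ι 𝕜 E) : IsParsevalFrame 𝕜 b := by
  intro x
  have h := lp.norm_rpow_eq_tsum (p := 2) (by norm_num) (b.repr x)
  simp only [LinearIsometryEquiv.norm_map, b.repr_apply_apply, ENNReal.toReal_ofNat,
    Real.rpow_two] at h
  simpa only [norm_inner_symm] using h

theorem Orthonormal.mem_topologicalClosure_span_of_norm_sq_le [CompleteSpace E] {v : ι → E}
    (hv : Orthonormal 𝕜 v) {x : E} (hx : ‖x‖ ^ 2 ≤ ∑' i, ‖(inner 𝕜 x (v i) : 𝕜)‖ ^ 2) :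
    x ∈ (span 𝕜 (Set.range v)).topologicalClosure := by
  set S := (span 𝕜 (Set.range v)).topologicalClosure
  have hvS (i : ι) : v i ∈ S := le_topologicalClosure _ (subset_span (Set.mem_range_self i))
  have hproj (i : ι) : inner 𝕜 x (v i) = inner 𝕜 (S.starProjection x) (v i) := by
    rw [inner_starProjection_left_eq_right, starProjection_eq_self_iff.mpr (hvS i)]
  have bessel : ∑' i, ‖(inner 𝕜 x (v i) : 𝕜)‖ ^ 2 ≤ ‖S.starProjection x‖ ^ 2 := by
    simpa only [hproj, norm_inner_symm] using hv.tsum_inner_products_le (S.starProjection x)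
  rw [mem_iff_norm_starProjection]
  refine le_antisymm (S.norm_starProjection_apply_le x) ?_
  exact (pow_le_pow_iff_left₀ (norm_nonneg _) (norm_nonneg _) two_ne_zero).mp (hx.trans bessel)

theorem map_mem_of_topologicalClosure_span_eq_top {F : Type*} [NormedAddCommGroup F]
    [InnerProductSpace 𝕜 F] {g : ι → E} (hg : (span 𝕜 (Set.range g)).topologicalClosure = ⊤)
    (L : E →L[𝕜] F) {S : Submodule 𝕜 F} (hS : IsClosed (S : Set F)) (hgS : ∀ i, L (g i) ∈ S)
    (w : E) : L w ∈ S := by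
  have : (span 𝕜 (Set.range g)).topologicalClosure ≤ S.comap (L : E →ₗ[𝕜] F) :=
    topologicalClosure_minimal _ (span_le.mpr (Set.range_subset_iff.mpr hgS))
      (hS.preimage L.continuous)
  exact this (hg ▸ mem_top)

end

namespace WithLp

variable {𝕜 ι E F : Type*} [RCLike 𝕜] [NormedAddCommGroup E] [InnerProductSpace 𝕜 E]
  [NormedAddCommGroup F] [InnerProductSpace 𝕜 F]

theorem inner_toLp_prod (x x' : E) (y y' : F) :
    (inner 𝕜 (toLp 2 (x, y)) (toLp 2 (x', y')) : 𝕜) = inner 𝕜 x x' + inner 𝕜 y y' :=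
  prod_inner_apply _ _

theorem orthonormal_toLp_prod_of_inner_eq [DecidableEq ι] {f : ι → E} {g : ι → F}
    (h : ∀ i j, (inner 𝕜 (g i) (g j) : 𝕜) = (if i = j then 1 else 0) - inner 𝕜 (f i) (f j)) :
    Orthonormal 𝕜 (fun i => toLp 2 (f i, g i)) := by
  rw [orthonormal_iff_ite]
  intro i j
  rw [inner_toLp_prod, h]
  ring

theorem _root_.HilbertBasis.isParsevalFrame_snd (b : HilbertBasis ι 𝕜 (WithLp 2 (E × F))) :
    IsParsevalFrame 𝕜 (fun i => (b i).snd) := by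
  intro w
  have := b.isParsevalFrame (toLp 2 (0, w))
  simpa [norm_toLp_snd, prod_inner_apply] using this

variable [CompleteSpace E] [CompleteSpace F]

theorem toLp_fst_mem_topologicalClosure_span {f : ι → E} {g : ι → F}
    (he : Orthonormal 𝕜 (fun i => toLp 2 (f i, g i))) (hf : IsParsevalFrame 𝕜 f) (x : E) :
    toLp 2 (x, (0 : F)) ∈ (span 𝕜 (Set.range fun i => toLp 2 (f i, g i))).topologicalClosure := by
  refine he.mem_topologicalClosure_span_of_norm_sq_le (le_of_eq ?_)
  simpa [norm_toLp_fst, inner_toLp_prod] using hf x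

theorem topologicalClosure_span_toLp_prod_eq_top {f : ι → E} {g : ι → F}
    (he : Orthonormal 𝕜 (fun i => toLp 2 (f i, g i))) (hf : IsParsevalFrame 𝕜 f)
    (hg : (span 𝕜 (Set.range g)).topologicalClosure = ⊤) :
    (span 𝕜 (Set.range fun i => toLp 2 (f i, g i))).topologicalClosure = ⊤ := by
  set S := (span 𝕜 (Set.range fun i => toLp 2 (f i, g i))).topologicalClosure
  have hfst (x : E) : toLp 2 (x, (0 : F)) ∈ S := toLp_fst_mem_topologicalClosure_span he hf x
  have hsnd (y : F) : toLp 2 ((0 : E), y) ∈ S := by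
    refine map_mem_of_topologicalClosure_span_eq_top hg
      ((prodContinuousLinearEquiv 2 𝕜 E F).symm.toContinuousLinearMap.comp
        (ContinuousLinearMap.inr 𝕜 E F)) (isClosed_topologicalClosure _) (fun i => ?_) y
    have hei : toLp 2 (f i, g i) ∈ S :=
      le_topologicalClosure _ (subset_span (Set.mem_range_self i))
    convert S.sub_mem hei (hfst (f i)) using 1
    rw [← toLp_sub, Prod.mk_sub_mk, sub_self, sub_zero]
    rfl
  refine eq_top_iff'.mpr fun z => ?_
  convert S.add_mem (hfst z.fst) (hsnd z.snd)
  rw [← toLp_add, Prod.mk_add_mk, add_zero, zero_add]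
  rfl

end WithLp

/-- If `(f i)` is a Parseval frame for `H₁` and `(g i)` spans a dense subspace of `H₂`
with `⟨g i, g j⟩ = δ_{ij} - ⟨f i, f j⟩`, then `(f i ⊕ g i)` is an orthonormal basis of
`H₁ ⊕ H₂` and `(g i)` is a Parseval frame for `H₂`. -/
theorem parseval_frame_complement_dilation {I H₁ H₂ : Type*} [DecidableEq I]
    [NormedAddCommGroup H₁] [InnerProductSpace ℂ H₁] [CompleteSpace H₁]
    [NormedAddCommGroup H₂] [InnerProductSpace ℂ H₂] [CompleteSpace H₂]
    (f : I → H₁) (g : I → H₂)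
    (hf : ∀ v : H₁, ‖v‖ ^ 2 = ∑' i, ‖(inner ℂ v (f i) : ℂ)‖ ^ 2)
    (hspan : (Submodule.span ℂ (Set.range g)).topologicalClosure = ⊤)
    (hg : ∀ i j, (inner ℂ (g i) (g j) : ℂ)
      = (if i = j then 1 else 0) - (inner ℂ (f i) (f j) : ℂ)) :
    (Orthonormal ℂ (fun i => (WithLp.equiv 2 (H₁ × H₂)).symm (f i, g i)) ∧
      (Submodule.span ℂ
        (Set.range (fun i => (WithLp.equiv 2 (H₁ × H₂)).symm (f i, g i)))).topologicalClosure
        = ⊤) ∧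
    ∀ w : H₂, ‖w‖ ^ 2 = ∑' i, ‖(inner ℂ w (g i) : ℂ)‖ ^ 2 := by
  simp only [WithLp.equiv_symm_apply]
  have he : Orthonormal ℂ fun i => WithLp.toLp 2 (f i, g i) :=
    WithLp.orthonormal_toLp_prod_of_inner_eq hg
  have hdense := WithLp.topologicalClosure_span_toLp_prod_eq_top he hf hspan
  refine ⟨⟨he, hdense⟩, ?_⟩
  have hg_frame := (HilbertBasis.mk he hdense.ge).isParsevalFrame_snd
  simp only [HilbertBasis.coe_mk] at hg_frame
  exact hg_frame
end

section
/- Let U and T be unitary operators on a Hilbert space H satisfying U T U⁻¹ = T², and let ψ ∈ H. Define K((j,k),(j',k')) := ⟨U^j T^k ψ, U^{j'} T^{k'} ψ⟩. Then for all j, j' ≤ 0 and all k, k' ∈ ℤ, K((j,k),(j',k')) = K((j, 2^{-j}+k),(j', 2^{-j'}+k')). (Here 2^{-j} ∈ ℤ since j ≤ 0.) -/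
/-!
From `U T U⁻¹ = T²` one gets `Uⁿ T = T^(2ⁿ) Uⁿ`, i.e. `T U⁻ⁿ = U⁻ⁿ T^(2ⁿ)`. Hence for `j ≤ 0`
shifting `k` by `2⁻ʲ` amounts to applying `T` on the left, `Uʲ T^(2⁻ʲ + k) = T Uʲ Tᵏ`, and
the kernel is unchanged because `T` preserves inner products.
-/

namespace SemiconjBy

variable {G : Type*} [Group G] {a b : G} {m : ℤ}

theorem pow_left_of_eq_zpow (h : SemiconjBy a b (b ^ m)) :
    ∀ n : ℕ, SemiconjBy (a ^ n) b (b ^ m ^ n)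
  | 0 => by simp
  | n + 1 => by
    have step : SemiconjBy a (b ^ m ^ n) (b ^ m ^ (n + 1)) := by
      simpa only [← zpow_mul, pow_succ', mul_comm] using h.zpow_right (m ^ n)
    simpa only [pow_succ'] using step.mul_left (pow_left_of_eq_zpow h n)

theorem zpow_mul_zpow_pow_add (h : SemiconjBy a b (b ^ m)) {j : ℤ} (hj : j ≤ 0) (k : ℤ) :
    a ^ j * b ^ (m ^ (-j).toNat + k) = b * (a ^ j * b ^ k) := by
  obtain ⟨n, rfl⟩ := Int.exists_eq_neg_ofNat hj
  have hn : (a ^ n)⁻¹ * b ^ m ^ n = b * (a ^ n)⁻¹ :=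
    SemiconjBy.inv_symm_left_iff.mpr (h.pow_left_of_eq_zpow n)
  rw [neg_neg, Int.toNat_natCast, zpow_neg, zpow_natCast, zpow_add, ← mul_assoc, hn,
    mul_assoc]

end SemiconjBy

/-- For unitaries `U, T` with `U T U⁻¹ = T²` and `ψ ∈ H`, for `j, j' ≤ 0` the kernel
`K((j,k),(j',k')) = ⟨Uʲ Tᵏ ψ, Uʲ' Tᵏ' ψ⟩` satisfies
`K((j,k),(j',k')) = K((j, 2⁻ʲ + k),(j', 2⁻ʲ' + k'))`. -/
theorem BS_kernel_translation_invariant {H : Type*} [NormedAddCommGroup H]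
    [InnerProductSpace ℂ H] (U T : H ≃ₗᵢ[ℂ] H) (hUT : U * T * U⁻¹ = T ^ 2) (ψ : H) :
    ∀ j j' k k' : ℤ, j ≤ 0 → j' ≤ 0 →
      (inner ℂ ((U ^ j * T ^ k) ψ) ((U ^ j' * T ^ k') ψ) : ℂ)
        = (inner ℂ ((U ^ j * T ^ ((2 : ℤ) ^ (-j).toNat + k)) ψ)
            ((U ^ j' * T ^ ((2 : ℤ) ^ (-j').toNat + k')) ψ) : ℂ) := by
  have hsemi : SemiconjBy U T (T ^ (2 : ℤ)) := by
    rw [SemiconjBy, ← mul_inv_eq_iff_eq_mul, hUT, zpow_ofNat]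
  intro j j' k k' hj hj'
  rw [hsemi.zpow_mul_zpow_pow_add hj, hsemi.zpow_mul_zpow_pow_add hj']
  exact (T.inner_map_map _ _).symm
end

section
/- Let d_ℤ be the bijection between eventually-constant binary sequences and ℤ (d₀ on eventually-zero sequences, d₁ on eventually-one sequences). Then for every x ∈ [0,1) and every eventually-constant sequence ω, 2(x + d_ℤ(ω)) = (2x mod 1) + d_ℤ(ω_x ω), where ω_x = ⌊2x⌋ and ω_x ω is the sequence with ω_x prepended. In other words, the encoding ε intertwines multiplication by 2 on ℝ with the shift map r̃ on [0,1) × A_ℤ. -/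
open scoped BigOperators

/-- Prepending a digit to an infinite binary sequence. -/
def prepend (a : Fin 2) (ω : ℕ → Fin 2) : ℕ → Fin 2
  | 0 => a
  | n + 1 => ω n

lemma sum_prepend (a : Fin 2) (ω : ℕ → Fin 2) (N : ℕ) :
    ∑ k ∈ Finset.range (N + 1), ((prepend a ω k : ℕ) : ℤ) * 2 ^ k
      = (a : ℕ) + 2 * ∑ k ∈ Finset.range N, ((ω k : ℕ) : ℤ) * 2 ^ k := by
  rw [Finset.sum_range_succ', Finset.mul_sum, add_comm]
  simp only [prepend, pow_zero, mul_one]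
  congr 1
  apply Finset.sum_congr rfl
  intro k _
  ring

/-- Let `d` be the decoding bijection between eventually-constant binary sequences and
`ℤ` (`d₀` on eventually-zero, `d₁` on eventually-one sequences). Then for `x ∈ [0,1)`
and eventually-constant `ω`: `2(x + d ω) = (2x mod 1) + d(ω_x ω)`, where `ω_x = ⌊2x⌋`;
i.e. the encoding intertwines multiplication by 2 with the shift map `r̃`. -/
theorem encoding_intertwines_doubling (d : (ℕ → Fin 2) → ℤ)
    (hd0 : ∀ (ω : ℕ → Fin 2) (N : ℕ), (∀ k ≥ N, ω k = 0) →
      d ω = ∑ k ∈ Finset.range N, ((ω k : ℕ) : ℤ) * 2 ^ k)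
    (hd1 : ∀ (ω : ℕ → Fin 2) (N : ℕ), (∀ k ≥ N, ω k = 1) →
      d ω = (∑ k ∈ Finset.range N, ((ω k : ℕ) : ℤ) * 2 ^ k) - 2 ^ N)
    (x : ℝ) (hx : x ∈ Set.Ico (0 : ℝ) 1) (ω : ℕ → Fin 2)
    (hω : (∃ N, ∀ k ≥ N, ω k = 0) ∨ (∃ N, ∀ k ≥ N, ω k = 1)) :
    2 * (x + (d ω : ℝ))
      = Int.fract (2 * x) + (d (prepend (if x < 1 / 2 then 0 else 1) ω) : ℝ) := by
  set a : Fin 2 := if x < 1 / 2 then 0 else 1 with ha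
  have key : d (prepend a ω) = (a : ℕ) + 2 * d ω := by
    rcases hω with ⟨N, hN⟩ | ⟨N, hN⟩
    · have h1 : ∀ k ≥ N + 1, prepend a ω k = 0 := by
        intro k hk
        cases k with
        | zero => omega
        | succ n => exact hN n (by omega)
      rw [hd0 _ _ h1, hd0 _ _ hN, sum_prepend]
    · have h1 : ∀ k ≥ N + 1, prepend a ω k = 1 := by
        intro k hk
        cases k with
        | zero => omega
        | succ n => exact hN n (by omega)
      rw [hd1 _ _ h1, hd1 _ _ hN, sum_prepend]
      ring
  have hfloor : ⌊2 * x⌋ = ((a : ℕ) : ℤ) := by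
    obtain ⟨h0, h1⟩ := hx
    rw [ha]
    split_ifs with h
    · simp [Int.floor_eq_zero_iff, Set.mem_Ico]
      constructor <;> linarith
    · push_neg at h
      have : ⌊2 * x⌋ = 1 := by
        apply Int.floor_eq_iff.mpr
        push_cast
        constructor <;> linarith
      simp [this]
  have hfract : Int.fract (2 * x) = 2 * x - ((a : ℕ) : ℤ) := by
    rw [Int.fract, hfloor]
  rw [key, hfract]
  push_cast
  ring
end
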